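/- (Interpolant combination lemma, main case) Let l be a literal, A_1,...,A_m, B_1,...,B_o clauses, C_1,...,C_p, D_1,...,D_r conjunctions of literals, E_1 a set of clauses and E_2 a set of conjunctions of literals, none containing l or l*. Suppose I_1 satisfies: ⋀{A_1,...,A_m} ∧ ⋀E_1 → I_1 and I_1 → ⋁{C_1,...,C_p} ∨ ⋁E_2 are valid; and I_2 satisfies: ⋀{B_1,...,B_o} ∧ ⋀E_1 → I_2 and I_2 → ⋁{D_1,...,D_r} ∨ ⋁E_2 are valid. Then I = (l ∨ I_1) ∧ (l* ∨ I_2) satisfies: (A_1∨l) ∧...∧ (A_m∨l) ∧ (B_1∨l*) ∧...∧ (B_o∨l*) ∧ ⋀E_1 → I is valid, and I → (C_1∧l*) ∨...∨ (C_p∧l*) ∨ (D_1∧l) ∨...∨ (D_r∧l) ∨ ⋁E_2 is valid. -/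

import Mathlib

/-- Propositional formulas over variables indexed by naturals. -/
inductive PropForm where
  | var : Nat → PropForm
  | fls : PropForm
  | tru : PropForm
  | neg : PropForm → PropForm
  | conj : PropForm → PropForm → PropForm
  | disj : PropForm → PropForm → PropForm
deriving DecidableEq

/-- Classical Boolean evaluation of a formula under a valuation. -/
def PropForm.eval (v : Nat → Bool) : PropForm → Bool
  | .var n => v n
  | .fls => false
  | .tru => true
  | .neg A => !(A.eval v)
  | .conj A B => A.eval v && B.eval v
  | .disj A B => A.eval v || B.eval v

/-- The propositional variables occurring in a formula. -/
def PropForm.vars : PropForm → Finset Nat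
  | .var n => {n}
  | .fls => ∅
  | .tru => ∅
  | .neg A => A.vars
  | .conj A B => A.vars ∪ B.vars
  | .disj A B => A.vars ∪ B.vars

/-- A formula is valid iff true under every valuation. -/
def PropForm.Valid (A : PropForm) : Prop := ∀ v : Nat → Bool, A.eval v = true

/-- Literals: a variable or its negation. -/
inductive Lit where
  | pos : Nat → Lit
  | neg : Nat → Lit
deriving DecidableEq

/-- The complement of a literal. -/
def Lit.compl : Lit → Lit
  | .pos n => .neg n
  | .neg n => .pos n

/-- The variable of a literal. -/
def Lit.var : Lit → Nat
  | .pos n => n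
  | .neg n => n

/-- Evaluation of a literal. -/
def Lit.eval (v : Nat → Bool) : Lit → Bool
  | .pos n => v n
  | .neg n => !(v n)

/-- A literal as a formula. -/
def Lit.toForm : Lit → PropForm
  | .pos n => .var n
  | .neg n => .neg (.var n)

/-- A clause (finite set of literals read disjunctively) is satisfied by `v`. -/
def clauseSat (v : Nat → Bool) (C : Finset Lit) : Prop := ∃ l ∈ C, l.eval v = true

/-- A conjunction of literals (finite set read conjunctively) is satisfied by `v`. -/
def cubeSat (v : Nat → Bool) (C : Finset Lit) : Prop := ∀ l ∈ C, l.eval v = true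


/-!
Split on the value of `l`. Where `l` is false, the clauses `Aᵢ ∨ l` reduce to `Aᵢ` and the
interpolant reduces to `I₁`, whose consequences `Cⱼ` extend to `Cⱼ ∧ l*`; where `l` is true the
same happens with `Bᵢ`, `I₂` and `Dⱼ ∧ l`.
-/

theorem Lit.eval_toForm (v : Nat → Bool) (l : Lit) : l.toForm.eval v = l.eval v := by
  cases l <;> rfl

theorem Lit.eval_compl (v : Nat → Bool) (l : Lit) : l.compl.eval v = !l.eval v := by
  cases l <;> simp [Lit.compl, Lit.eval]

theorem clauseSat_of_clauseSat_insert {v : Nat → Bool} {l : Lit} {A : Finset Lit}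
    (hl : l.eval v = false) (h : clauseSat v (insert l A)) : clauseSat v A := by
  obtain ⟨x, hx, hxv⟩ := h
  rcases Finset.mem_insert.mp hx with rfl | hxA
  · simp [hl] at hxv
  · exact ⟨x, hxA, hxv⟩

theorem cubeSat_insert_of_cubeSat {v : Nat → Bool} {l : Lit} {C : Finset Lit}
    (hl : l.eval v = true) (h : cubeSat v C) : cubeSat v (insert l C) :=
  Finset.forall_mem_insert _ _ _ |>.mpr ⟨hl, h⟩

theorem eval_conj_disj_lit_disj_compl (v : Nat → Bool) (l : Lit) (I₁ I₂ : PropForm) :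
    (PropForm.conj (PropForm.disj l.toForm I₁) (PropForm.disj l.compl.toForm I₂)).eval v =
      cond (l.eval v) (I₂.eval v) (I₁.eval v) := by
  cases hl : l.eval v <;> simp [PropForm.eval, Lit.eval_toForm, Lit.eval_compl, hl]

theorem stmt4_general (l : Lit) (As Bs : List (Finset Lit)) (Cs Ds : List (Finset Lit))
    (E₁ E₂ : Finset (Finset Lit)) (I₁ I₂ : PropForm)
    (hI₁l : ∀ v : Nat → Bool,
      ((∀ A ∈ As, clauseSat v A) ∧ (∀ C ∈ E₁, clauseSat v C)) → I₁.eval v = true)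
    (hI₁r : ∀ v : Nat → Bool, I₁.eval v = true →
      (∃ C ∈ Cs, cubeSat v C) ∨ (∃ C ∈ E₂, cubeSat v C))
    (hI₂l : ∀ v : Nat → Bool,
      ((∀ B ∈ Bs, clauseSat v B) ∧ (∀ C ∈ E₁, clauseSat v C)) → I₂.eval v = true)
    (hI₂r : ∀ v : Nat → Bool, I₂.eval v = true →
      (∃ D ∈ Ds, cubeSat v D) ∨ (∃ C ∈ E₂, cubeSat v C)) :
    (∀ v : Nat → Bool,
      ((∀ A ∈ As, clauseSat v (insert l A)) ∧
       (∀ B ∈ Bs, clauseSat v (insert l.compl B)) ∧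
       (∀ C ∈ E₁, clauseSat v C)) →
      (PropForm.conj (PropForm.disj l.toForm I₁)
        (PropForm.disj l.compl.toForm I₂)).eval v = true) ∧
    (∀ v : Nat → Bool,
      (PropForm.conj (PropForm.disj l.toForm I₁)
        (PropForm.disj l.compl.toForm I₂)).eval v = true →
      (∃ C ∈ Cs, cubeSat v (insert l.compl C)) ∨
      (∃ D ∈ Ds, cubeSat v (insert l D)) ∨
      (∃ C ∈ E₂, cubeSat v C)) := by
  constructor
  · rintro v ⟨hA, hB, hE⟩
    rw [eval_conj_disj_lit_disj_compl]
    cases hl : l.eval v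
    · exact hI₁l v ⟨fun A hA' => clauseSat_of_clauseSat_insert hl (hA A hA'), hE⟩
    · have hlc : l.compl.eval v = false := by simp [Lit.eval_compl, hl]
      exact hI₂l v ⟨fun B hB' => clauseSat_of_clauseSat_insert hlc (hB B hB'), hE⟩
  · intro v hI
    rw [eval_conj_disj_lit_disj_compl] at hI
    cases hl : l.eval v <;> rw [hl] at hI
    · have hlc : l.compl.eval v = true := by simp [Lit.eval_compl, hl]
      rcases hI₁r v hI with ⟨C, hC, hCv⟩ | hE₂
      · exact .inl ⟨C, hC, cubeSat_insert_of_cubeSat hlc hCv⟩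
      · exact .inr (.inr hE₂)
    · rcases hI₂r v hI with ⟨D, hD, hDv⟩ | hE₂
      · exact .inr (.inl ⟨D, hD, cubeSat_insert_of_cubeSat hl hDv⟩)
      · exact .inr (.inr hE₂)

theorem stmt4 (l : Lit) (As Bs : List (Finset Lit)) (Cs Ds : List (Finset Lit))
    (E₁ E₂ : Finset (Finset Lit)) (I₁ I₂ : PropForm)
    (hAs : ∀ A ∈ As, l ∉ A ∧ l.compl ∉ A)
    (hBs : ∀ B ∈ Bs, l ∉ B ∧ l.compl ∉ B)
    (hCs : ∀ C ∈ Cs, l ∉ C ∧ l.compl ∉ C)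
    (hDs : ∀ D ∈ Ds, l ∉ D ∧ l.compl ∉ D)
    (hE₁ : ∀ C ∈ E₁, l ∉ C ∧ l.compl ∉ C)
    (hE₂ : ∀ C ∈ E₂, l ∉ C ∧ l.compl ∉ C)
    (hI₁l : ∀ v : Nat → Bool,
      ((∀ A ∈ As, clauseSat v A) ∧ (∀ C ∈ E₁, clauseSat v C)) → I₁.eval v = true)
    (hI₁r : ∀ v : Nat → Bool, I₁.eval v = true →
      (∃ C ∈ Cs, cubeSat v C) ∨ (∃ C ∈ E₂, cubeSat v C))
    (hI₂l : ∀ v : Nat → Bool,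
      ((∀ B ∈ Bs, clauseSat v B) ∧ (∀ C ∈ E₁, clauseSat v C)) → I₂.eval v = true)
    (hI₂r : ∀ v : Nat → Bool, I₂.eval v = true →
      (∃ D ∈ Ds, cubeSat v D) ∨ (∃ C ∈ E₂, cubeSat v C)) :
    (∀ v : Nat → Bool,
      ((∀ A ∈ As, clauseSat v (insert l A)) ∧
       (∀ B ∈ Bs, clauseSat v (insert l.compl B)) ∧
       (∀ C ∈ E₁, clauseSat v C)) →
      (PropForm.conj (PropForm.disj l.toForm I₁)
        (PropForm.disj l.compl.toForm I₂)).eval v = true) ∧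
    (∀ v : Nat → Bool,
      (PropForm.conj (PropForm.disj l.toForm I₁)
        (PropForm.disj l.compl.toForm I₂)).eval v = true →
      (∃ C ∈ Cs, cubeSat v (insert l.compl C)) ∨
      (∃ D ∈ Ds, cubeSat v (insert l D)) ∨
      (∃ C ∈ E₂, cubeSat v C)) :=
  stmt4_general l As Bs Cs Ds E₁ E₂ I₁ I₂ hI₁l hI₁r hI₂l hI₂r
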